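/- Let x ∈ gl₃(𝕂) be a 3×3 matrix with x₃₃ = 0 and x₁₃ ≠ x₃₁. Then there exist g₁, g₂ ∈ N₃ such that g₁·x·g₂^τ = x and χ_{N₃}(g₁)·χ_{N₃}(g₂) ≠ 1. -/

import Mathlib

/-!
With `E = single 2 2 1`, the elements `g₁ = 1 + t • x E` and `g₂ = 1 - t • xᵀ E` lie in `N₃`,
and `g₁ x g₂ᵀ = x + t x E x - t x E x - t² x E x E x = x` because `E x E = x₃₃ • E = 0`.
Their characters multiply to `ψ (t (x₁₃ - x₃₁))`, which is `≠ 1` for a suitable `t` since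
`ψ` is nontrivial and `x₁₃ - x₃₁ ≠ 0`.
-/

open Matrix

/-- The subgroup `N₃ ⊆ GL₃(𝕂)` of matrices of the form `[[1,0,d],[0,1,c],[0,0,1]]`. -/
def N3 (𝕂 : Type*) [RCLike 𝕂] : Set (Matrix (Fin 3) (Fin 3) 𝕂) :=
  {g | ∃ c d : 𝕂, g = !![1, 0, d; 0, 1, c; 0, 0, 1]}

theorem Matrix.one_add_smul_mul_single_mul_mul_one_sub {n R : Type*} [Fintype n] [DecidableEq n]
    [CommRing R] (x : Matrix n n R) {k : n} (hk : x k k = 0) (t : R) :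
    (1 + t • (x * single k k 1)) * x * (1 - t • (single k k 1 * x)) = x := by
  have hE : single k k (1 : R) * x * single k k 1 = 0 := by
    rw [single_mul_mul_single, hk, mul_zero, zero_mul, single_zero]
  calc (1 + t • (x * single k k 1)) * x * (1 - t • (single k k 1 * x))
      = x - (t * t) • (x * (single k k 1 * x * single k k 1) * x) := by
        simp only [add_mul, mul_sub, one_mul, mul_one, smul_mul_assoc, mul_smul_comm,
          Matrix.mul_assoc]
        module
    _ = x := by rw [hE, Matrix.mul_zero, Matrix.zero_mul, smul_zero, sub_zero]

theorem one_add_smul_mul_single_mem_N3 {𝕂 : Type*} [RCLike 𝕂] (y : Matrix (Fin 3) (Fin 3) 𝕂)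
    (hy : y 2 2 = 0) (t : 𝕂) :
    1 + t • (y * single 2 2 1) ∈ N3 𝕂 := by
  refine ⟨t * y 1 2, t * y 0 2, ?_⟩
  ext i j
  fin_cases i <;> fin_cases j <;> simp [hy]

theorem exists_apply_mul_ne_one {K M : Type*} [DivisionRing K] (ψ : K → M) [One M]
    (hψ : ∃ t, ψ t ≠ 1) {a : K} (ha : a ≠ 0) : ∃ s, ψ (s * a) ≠ 1 := by
  obtain ⟨t, ht⟩ := hψ
  exact ⟨t / a, by rwa [div_mul_cancel₀ t ha]⟩

theorem gl3_unipotent_incompatibility {𝕂 : Type*} [RCLike 𝕂]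
    (ψ : 𝕂 → ℂ) (hψ_add : ∀ s t, ψ (s + t) = ψ s * ψ t)
    (hψ_nontriv : ∃ t, ψ t ≠ 1)
    (x : Matrix (Fin 3) (Fin 3) 𝕂) (h33 : x 2 2 = 0) (hne : x 0 2 ≠ x 2 0) :
    ∃ g₁ ∈ N3 𝕂, ∃ g₂ ∈ N3 𝕂, g₁ * x * g₂ᵀ = x ∧ ψ (g₁ 0 2) * ψ (g₂ 0 2) ≠ 1 := by
  obtain ⟨t, ht⟩ := exists_apply_mul_ne_one ψ hψ_nontriv (sub_ne_zero.mpr hne)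
  have hxT : xᵀ 2 2 = 0 := h33
  refine ⟨1 + t • (x * single 2 2 1), one_add_smul_mul_single_mem_N3 x h33 t,
    1 + (-t) • (xᵀ * single 2 2 1), one_add_smul_mul_single_mem_N3 xᵀ hxT (-t), ?_, ?_⟩
  · rw [transpose_add, transpose_one, transpose_smul, transpose_mul, transpose_single,
      transpose_transpose, neg_smul, ← sub_eq_add_neg]
    exact one_add_smul_mul_single_mul_mul_one_sub x h33 t
  · have hchar : t * x 0 2 + -(t * x 2 0) = t * (x 0 2 - x 2 0) := by ring
    simpa [← hψ_add, h33, hchar] using ht
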